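/- Let k be an algebraically closed field of characteristic zero, n ≥ 2, A an n × n matrix over k, and A_H the (n−1) × (n−1) matrix obtained by deleting the last row and last column of A. For c ∈ k the following are equivalent: (i) c is an eigenvalue of A and c is an eigenvalue of A_H; (ii) either there is a nonzero v ∈ kⁿ with A v = c v and v_n = 0, or there is a nonzero w ∈ kⁿ with Aᵀ w = c w and w_n = 0. -/
import Mathlib


open Matrix

lemma aux_mulVec_castSucc {k : Type*} [Field k] {n : ℕ}
    (M : Matrix (Fin (n + 1)) (Fin (n + 1)) k) (v : Fin (n + 1) → k) (i : Fin n) :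
    M.mulVec v i.castSucc
      = (M.submatrix Fin.castSucc Fin.castSucc).mulVec (Fin.init v) i
        + M i.castSucc (Fin.last n) * v (Fin.last n) := by
  simp only [mulVec, dotProduct, submatrix_apply, Fin.sum_univ_castSucc, Fin.init]

lemma aux_det_minor {k : Type*} [Field k] {n : ℕ}
    (M : Matrix (Fin (n + 1)) (Fin (n + 1)) k) (v : Fin (n + 1) → k)
    (hv : v ≠ 0) (h : M.mulVec v = 0) (hlast : v (Fin.last n) = 0) :
    (M.submatrix Fin.castSucc Fin.castSucc).det = 0 := by
  rw [← Matrix.exists_mulVec_eq_zero_iff]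
  refine ⟨Fin.init v, ?_, ?_⟩
  · intro h0
    apply hv
    funext i
    induction i using Fin.lastCases with
    | last => exact hlast
    | cast i => exact congrFun h0 i
  · funext i
    have := aux_mulVec_castSucc M v i
    rw [congrFun h i.castSucc, hlast, mul_zero, add_zero] at this
    simp [← this]

/-- `A` and the matrix `A_H` obtained by deleting the last row and column share the
eigenvalue `c` iff either `A` has a nonzero eigenvector with last coordinate `0` and
eigenvalue `c`, or `Aᵀ` does. -/
theorem statement6 (k : Type*) [Field k] [IsAlgClosed k] [CharZero k]
    (n : ℕ) (hn : 1 ≤ n) (A : Matrix (Fin (n + 1)) (Fin (n + 1)) k) (c : k) :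
    ((A - c • 1).det = 0 ∧
        (A.submatrix Fin.castSucc Fin.castSucc - c • (1 : Matrix (Fin n) (Fin n) k)).det = 0) ↔
      ((∃ v : Fin (n + 1) → k, v ≠ 0 ∧ A.mulVec v = c • v ∧ v (Fin.last n) = 0) ∨
        (∃ w : Fin (n + 1) → k, w ≠ 0 ∧ Aᵀ.mulVec w = c • w ∧ w (Fin.last n) = 0)) := by
  set M : Matrix (Fin (n + 1)) (Fin (n + 1)) k := A - c • 1 with hM
  have hMsub : M.submatrix Fin.castSucc Fin.castSucc
      = A.submatrix Fin.castSucc Fin.castSucc - c • (1 : Matrix (Fin n) (Fin n) k) := by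
    ext i j
    simp [hM, Matrix.one_apply, Fin.castSucc_inj]
  have hMv : ∀ v : Fin (n + 1) → k, M.mulVec v = A.mulVec v - c • v := by
    intro v
    rw [hM, sub_mulVec, smul_mulVec, one_mulVec]
  have hMtv : ∀ v : Fin (n + 1) → k, Mᵀ.mulVec v = Aᵀ.mulVec v - c • v := by
    intro v
    rw [hM, transpose_sub, transpose_smul, transpose_one, sub_mulVec, smul_mulVec,
      one_mulVec]
  constructor
  · rintro ⟨h1, h2⟩
    rw [← hMsub, ← Matrix.exists_mulVec_eq_zero_iff] at h2
    obtain ⟨u', hu', hu0⟩ := h2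
    set u : Fin (n + 1) → k := Fin.snoc u' 0 with hu
    have hulast : u (Fin.last n) = 0 := Fin.snoc_last _ _
    have huinit : Fin.init u = u' := Fin.init_snoc _ _
    have hucast : ∀ i : Fin n, M.mulVec u i.castSucc = 0 := by
      intro i
      rw [aux_mulVec_castSucc, huinit, hu0, hulast]
      simp
    by_cases ht : M.mulVec u (Fin.last n) = 0
    · left
      refine ⟨u, ?_, ?_, hulast⟩
      · intro h0
        apply hu'
        funext i
        have := congrFun h0 i.castSucc
        simpa [hu, Fin.snoc_castSucc] using this
      · have hMu : M.mulVec u = 0 := by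
          funext i
          induction i using Fin.lastCases with
          | last => exact ht
          | cast i => exact hucast i
        rw [hMv] at hMu
        exact sub_eq_zero.mp hMu
    · right
      have h1' : Mᵀ.det = 0 := by rw [det_transpose]; exact h1
      rw [← Matrix.exists_mulVec_eq_zero_iff] at h1'
      obtain ⟨w, hw, hw0⟩ := h1'
      refine ⟨w, hw, ?_, ?_⟩
      · rw [hMtv] at hw0
        exact sub_eq_zero.mp hw0
      · have hdp : w ⬝ᵥ M.mulVec u = 0 := by
          rw [Matrix.dotProduct_mulVec, ← Matrix.mulVec_transpose, hw0, zero_dotProduct]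
        have hexp : w ⬝ᵥ M.mulVec u = w (Fin.last n) * M.mulVec u (Fin.last n) := by
          rw [dotProduct, Fin.sum_univ_castSucc]
          have : ∀ i : Fin n, w i.castSucc * M.mulVec u i.castSucc = 0 := by
            intro i; rw [hucast i, mul_zero]
          rw [Finset.sum_eq_zero fun i _ => this i, zero_add]
        rw [hexp] at hdp
        exact (mul_eq_zero.mp hdp).resolve_right ht
  · rintro (⟨v, hv, hAv, hvlast⟩ | ⟨w, hw, hAw, hwlast⟩)
    · have hMv0 : M.mulVec v = 0 := by
        rw [hMv, hAv, sub_self]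
      refine ⟨?_, ?_⟩
      · rw [← Matrix.exists_mulVec_eq_zero_iff]; exact ⟨v, hv, hMv0⟩
      · rw [← hMsub]; exact aux_det_minor M v hv hMv0 hvlast
    · have hMw0 : Mᵀ.mulVec w = 0 := by
        rw [hMtv, hAw, sub_self]
      refine ⟨?_, ?_⟩
      · rw [← det_transpose, ← Matrix.exists_mulVec_eq_zero_iff]; exact ⟨w, hw, hMw0⟩
      · rw [← hMsub, ← det_transpose, transpose_submatrix]
        exact aux_det_minor Mᵀ w hw hMw0 hwlast
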